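/- Let A be the 3-dimensional complex 3-Lie algebra with [e1,e2,e3] = e1, and let T have matrix O_30: T(e1) = e1 + e2 + e3, T(e2) = e1 + (√3 − 1) e3, T(e3) = e1 − (1 + √3) e2. Then T is an O-operator with respect to the adjoint representation. -/

import Mathlib

/-!
The bracket is `[x, y, z] = det(x, y, z) • e₁`, so for `T` with matrix `A` the left side of the
`𝒪`-operator identity is `det A · det(x, y, z) • e₁`, while the cyclic sum on the right is
`σ₂(A) · det(x, y, z) • e₁`, with `σ₂(A)` the sum of the principal `2 × 2` minors. Hence `T` is an
`𝒪`-operator as soon as `det A • e₁ = σ₂(A) • T e₁`, and for `O₃₀` both `det A` and `σ₂(A)` equal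
`s² - 3 = 0`.
-/

open Finset

/-- The standard basis of `ℂ³`: `e 0 = e₁`, `e 1 = e₂`, `e 2 = e₃`. -/
def e (i : Fin 3) : Fin 3 → ℂ := fun j => if j = i then 1 else 0

/-- The trilinear skew-symmetric bracket on `ℂ³` determined by `[e₁,e₂,e₃] = e₁`. -/
def br (x y z : Fin 3 → ℂ) : Fin 3 → ℂ := fun i =>
  if i = 0 then
    x 0 * (y 1 * z 2 - y 2 * z 1) - x 1 * (y 0 * z 2 - y 2 * z 0)
      + x 2 * (y 0 * z 1 - y 1 * z 0)
  else 0

/-- `T` is an `𝒪`-operator with respect to the adjoint representation. -/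
def IsOOperator (T : (Fin 3 → ℂ) →ₗ[ℂ] (Fin 3 → ℂ)) : Prop :=
  ∀ x y z : Fin 3 → ℂ, br (T x) (T y) (T z) =
    T (br (T x) (T y) z + br (T y) (T z) x + br (T z) (T x) y)

namespace Matrix

variable {R : Type*} [CommRing R]

def principalMinorSum₂ (A : Matrix (Fin 3) (Fin 3) R) : R :=
  (A 0 0 * A 1 1 - A 0 1 * A 1 0) + (A 0 0 * A 2 2 - A 0 2 * A 2 0)
    + (A 1 1 * A 2 2 - A 1 2 * A 2 1)

theorem det_of_mulVec (A : Matrix (Fin 3) (Fin 3) R) (x y z : Fin 3 → R) :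
    det (of ![A *ᵥ x, A *ᵥ y, A *ᵥ z]) = det A * det (of ![x, y, z]) := by
  have hrows : of ![A *ᵥ x, A *ᵥ y, A *ᵥ z] = of ![x, y, z] * Aᵀ := by
    ext i j; fin_cases i <;> simp [mulVec, vecMul, dotProduct_comm]
  rw [hrows, det_mul, det_transpose, mul_comm]

theorem det_of_mulVec_cyclic_sum (A : Matrix (Fin 3) (Fin 3) R) (x y z : Fin 3 → R) :
    det (of ![A *ᵥ x, A *ᵥ y, z]) + det (of ![A *ᵥ y, A *ᵥ z, x])
      + det (of ![A *ᵥ z, A *ᵥ x, y]) = principalMinorSum₂ A * det (of ![x, y, z]) := by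
  simp only [det_fin_three, principalMinorSum₂, mulVec, dotProduct, Fin.sum_univ_three, of_apply,
    cons_val', cons_val_fin_one, cons_val_zero, cons_val_one, cons_val]
  ring

end Matrix

open Matrix

theorem e_eq_single (i : Fin 3) : e i = Pi.single i 1 := by
  funext j; simp [e, Pi.single_apply]

theorem br_eq_det_smul (x y z : Fin 3 → ℂ) : br x y z = det (of ![x, y, z]) • e 0 := by
  funext i; fin_cases i <;> simp [br, e, det_fin_three]; ring

theorem isOOperator_of_det_smul_eq (T : (Fin 3 → ℂ) →ₗ[ℂ] (Fin 3 → ℂ))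
    (h : det (LinearMap.toMatrix' T) • e 0
      = principalMinorSum₂ (LinearMap.toMatrix' T) • T (e 0)) :
    IsOOperator T := by
  intro x y z
  have hT (v : Fin 3 → ℂ) : T v = LinearMap.toMatrix' T *ᵥ v :=
    (LinearMap.toMatrix'_mulVec T v).symm
  simp only [br_eq_det_smul, ← add_smul, map_smul]
  simp only [hT, det_of_mulVec, det_of_mulVec_cyclic_sum]
  rw [← hT, mul_comm, mul_smul, h, smul_smul, mul_comm]

/-- The linear map with matrix `O₃₀` is an `𝒪`-operator, where `s` is a fixed
square root of `3` in `ℂ`. -/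
theorem O30_is_O_operator (T : (Fin 3 → ℂ) →ₗ[ℂ] (Fin 3 → ℂ))
    (s : ℂ) (hs : s ^ 2 = 3)
    (h1 : T (e 0) = e 0 + e 1 + e 2)
    (h2 : T (e 1) = e 0 + (s - 1) • e 2)
    (h3 : T (e 2) = e 0 - (1 + s) • e 1) :
    IsOOperator T := by
  have hA : LinearMap.toMatrix' T = !![1, 1, 1; 1, 0, -(1 + s); 1, s - 1, 0] := by
    ext i j
    fin_cases i <;> fin_cases j <;> simp [LinearMap.toMatrix'_apply, ← e_eq_single, h1, h2, h3, e]
  have hdet : det (LinearMap.toMatrix' T) = 0 := by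
    rw [hA, det_fin_three]
    simp only [of_apply, cons_val', cons_val_zero, cons_val_one, cons_val_fin_one, Matrix.cons_val]
    linear_combination hs
  have hminors : principalMinorSum₂ (LinearMap.toMatrix' T) = 0 := by
    rw [hA, principalMinorSum₂]
    simp only [of_apply, cons_val', cons_val_zero, cons_val_one, cons_val_fin_one, Matrix.cons_val]
    linear_combination hs
  apply isOOperator_of_det_smul_eq
  rw [hdet, hminors, zero_smul, zero_smul]
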